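/- arXiv:1510.01960 — 3 statements merged into one kernel-verified Lean document; each statement's English description precedes it below -/
import Mathlib

section
/- Let f : ℝ² → ℝ be a continuously differentiable function with compact support. Then ‖f‖_{L⁴(ℝ²)} ≤ √2 · ‖f‖_{L²(ℝ²)}^{1/2} · ‖∇f‖_{L²(ℝ²)}^{1/2}, i.e. (∫_{ℝ²} |f|⁴ dx)^{1/4} ≤ √2 · (∫_{ℝ²} |f|² dx)^{1/4} · (∫_{ℝ²} ‖∇f(x)‖² dx)^{1/4}. -/
/-!
On a line, a `C¹` compactly supported `g` satisfies `g(t)² = ∫_{-∞}^t (g²)' ≤ 2 ∫ |g| |g'|`.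
Applied along horizontal and vertical lines, this bounds `f(x, y)²` both by a function of `x`
alone and by a function of `y` alone, each with integral `2 ∫ |f| ‖∇f‖`. Multiplying the two
bounds and integrating with Fubini gives `∫ f⁴ ≤ 4 (∫ |f| ‖∇f‖)²`, and Cauchy–Schwarz bounds the
right-hand side by `4 ‖f‖₂² ‖∇f‖₂²`.
-/

open MeasureTheory
open scoped Gradient

theorem HasCompactSupport.sq_le_two_mul_integral_abs_mul {g G : ℝ → ℝ} (hg : ContDiff ℝ 1 g)
    (hgs : HasCompactSupport g) (hG : Continuous G) (hgG : ∀ s, |deriv g s| ≤ G s) (t : ℝ) :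
    g t ^ 2 ≤ 2 * ∫ s, |g s| * G s := by
  have hderiv : ∀ s, deriv (fun u => g u ^ 2) s = 2 * g s * deriv g s := fun s => by
    simp [deriv_fun_pow (hg.differentiable one_ne_zero s)]
  have hint : Integrable (fun s => 2 * (|g s| * G s)) :=
    ((hg.continuous.abs.mul hG).integrable_of_hasCompactSupport hgs.abs.mul_right).const_mul 2
  calc g t ^ 2 = ∫ s in Set.Iic t, deriv (fun u => g u ^ 2) s :=
        ((hgs.comp_left (g := fun u : ℝ => u ^ 2) (by norm_num)).integral_Iic_deriv_eq
          (hg.pow 2) t).symm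
    _ ≤ ∫ s in Set.Iic t, 2 * (|g s| * G s) := by
        refine le_trans (Real.le_norm_self _) (norm_integral_le_of_norm_le hint.integrableOn ?_)
        refine Filter.Eventually.of_forall fun s => ?_
        rw [hderiv, Real.norm_eq_abs, abs_mul, abs_mul, abs_two, mul_assoc]
        gcongr
        exact hgG s
    _ ≤ ∫ s, 2 * (|g s| * G s) :=
        setIntegral_le_integral hint (.of_forall fun s => by
          have := (abs_nonneg _).trans (hgG s); positivity)
    _ = 2 * ∫ s, |g s| * G s := integral_const_mul 2 _

section Gradient

variable {F : Type*} [NormedAddCommGroup F] [InnerProductSpace ℝ F] [CompleteSpace F]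

theorem abs_fderiv_apply_le_norm_gradient (f : F → ℝ) (x v : F) :
    |fderiv ℝ f x v| ≤ ‖∇ f x‖ * ‖v‖ := by
  rw [gradient, LinearIsometryEquiv.norm_map]
  exact (fderiv ℝ f x).le_opNorm v

theorem ContDiff.continuous_gradient {f : F → ℝ} (hf : ContDiff ℝ 1 f) : Continuous (∇ f) :=
  (InnerProductSpace.toDual ℝ F).symm.continuous.comp (hf.continuous_fderiv one_ne_zero)

theorem HasCompactSupport.gradient {f : F → ℝ} (hf : HasCompactSupport f) :
    HasCompactSupport (∇ f) :=
  (hf.fderiv ℝ).comp_left (map_zero (InnerProductSpace.toDual ℝ F).symm)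

theorem HasCompactSupport.sq_le_two_mul_integral_along_line {f : F → ℝ} (hf : ContDiff ℝ 1 f)
    (hfs : HasCompactSupport f) {v : F} (hv : ‖v‖ = 1) (w : F) (t : ℝ) :
    f (t • v + w) ^ 2 ≤ 2 * ∫ s : ℝ, |f (s • v + w)| * ‖∇ f (s • v + w)‖ := by
  have hline : ∀ s, HasDerivAt (fun u : ℝ => u • v + w) v s := fun s => by
    simpa using ((hasDerivAt_id s).smul_const v).add_const w
  have hv0 : v ≠ 0 := norm_ne_zero_iff.mp (by simp [hv])
  refine HasCompactSupport.sq_le_two_mul_integral_abs_mul (g := fun s => f (s • v + w))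
    (hf.comp ((contDiff_id.smul contDiff_const).add contDiff_const))
    (hfs.comp_isClosedEmbedding ((Homeomorph.addRight w).isClosedEmbedding.comp
      (isClosedEmbedding_smul_left hv0)))
    (hf.continuous_gradient.norm.comp (by fun_prop)) (fun s => ?_) t
  have hderiv : HasDerivAt (fun u => f (u • v + w)) (fderiv ℝ f (s • v + w) v) s :=
    (hf.differentiable one_ne_zero _).hasFDerivAt.comp_hasDerivAt s (hline s)
  simpa [hderiv.deriv, hv] using abs_fderiv_apply_le_norm_gradient f (s • v + w) v

end Gradient

theorem integral_pow_four_le_mul_of_sq_le {α β : Type*} [MeasurableSpace α] [MeasurableSpace β]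
    {μ : Measure α} {ν : Measure β} [SFinite μ] [SFinite ν] {K : α × β → ℝ} {a : α → ℝ}
    {b : β → ℝ} (ha : Integrable a μ) (hb : Integrable b ν) (hKa : ∀ p, K p ^ 2 ≤ a p.1)
    (hKb : ∀ p, K p ^ 2 ≤ b p.2) :
    ∫ p, K p ^ 4 ∂μ.prod ν ≤ (∫ x, a x ∂μ) * ∫ y, b y ∂ν := by
  rw [← integral_prod_mul]
  refine integral_mono_of_nonneg (.of_forall fun p => by positivity) (ha.mul_prod hb)
    (.of_forall fun p => ?_)
  calc K p ^ 4 = K p ^ 2 * K p ^ 2 := by ring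
    _ ≤ a p.1 * b p.2 := mul_le_mul (hKa p) (hKb p) (sq_nonneg _) ((sq_nonneg _).trans (hKa p))

noncomputable def prodToEuclidean : ℝ × ℝ ≃ᵐ EuclideanSpace ℝ (Fin 2) :=
  MeasurableEquiv.finTwoArrow.symm.trans (MeasurableEquiv.toLp 2 (Fin 2 → ℝ))

theorem volume_preserving_prodToEuclidean : MeasurePreserving prodToEuclidean :=
  (PiLp.volume_preserving_toLp (Fin 2)).comp (volume_preserving_finTwoArrow ℝ).symm

theorem prodToEuclidean_apply (p : ℝ × ℝ) :
    prodToEuclidean p = p.1 • EuclideanSpace.single 0 1 + p.2 • EuclideanSpace.single 1 1 := by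
  ext i
  fin_cases i <;> simp [prodToEuclidean, MeasurableEquiv.finTwoArrow]

theorem integral_pow_four_le_four_mul_sq_integral_abs_mul_norm_gradient
    {f : EuclideanSpace ℝ (Fin 2) → ℝ} (hf : ContDiff ℝ 1 f) (hfs : HasCompactSupport f) :
    ∫ x, f x ^ 4 ≤ 4 * (∫ x, |f x| * ‖∇ f x‖) ^ 2 := by
  set e := prodToEuclidean
  have he : MeasurePreserving e := volume_preserving_prodToEuclidean
  set m := fun x => |f x| * ‖∇ f x‖
  have hm : Integrable (fun p => m (e p)) (volume.prod volume) :=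
    (he.integrable_comp_emb e.measurableEmbedding).2
      ((hf.continuous.abs.mul hf.continuous_gradient.norm).integrable_of_hasCompactSupport
        hfs.abs.mul_right)
  have hfst : ∫ x, ∫ t, m (e (x, t)) = ∫ x, m x :=
    (integral_prod _ hm).symm.trans (he.integral_comp' m)
  have hsnd : ∫ y, ∫ s, m (e (s, y)) = ∫ x, m x :=
    calc ∫ y, ∫ s, m (e (s, y)) = ∫ p, m (e p.swap) ∂volume.prod volume :=
          (integral_prod _ hm.swap).symm
      _ = ∫ p, m (e p) ∂volume.prod volume := integral_prod_swap (fun p => m (e p))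
      _ = ∫ x, m x := he.integral_comp' m
  have hnorm : ∀ i : Fin 2, ‖EuclideanSpace.single i (1 : ℝ)‖ = 1 := fun i => by simp
  have hcomm : ∀ s t : ℝ, (s • EuclideanSpace.single 0 1 + t • EuclideanSpace.single 1 1 :
      EuclideanSpace ℝ (Fin 2)) = t • EuclideanSpace.single 1 1 + s • EuclideanSpace.single 0 1 :=
    fun _ _ => add_comm _ _
  have hbound := integral_pow_four_le_mul_of_sq_le (K := fun p => f (e p))
    (a := fun x => 2 * ∫ t, m (e (x, t))) (b := fun y => 2 * ∫ s, m (e (s, y)))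
    (hm.integral_prod_left.const_mul 2) (hm.swap.integral_prod_left.const_mul 2)
    (fun p => by
      simpa only [m, e, prodToEuclidean_apply, hcomm] using
        hfs.sq_le_two_mul_integral_along_line hf (hnorm 1) (p.1 • EuclideanSpace.single 0 1) p.2)
    (fun p => by
      simpa only [m, e, prodToEuclidean_apply] using
        hfs.sq_le_two_mul_integral_along_line hf (hnorm 0) (p.2 • EuclideanSpace.single 1 1) p.1)
  calc ∫ x, f x ^ 4 = ∫ p, f (e p) ^ 4 ∂volume.prod volume :=
        (he.integral_comp' (fun x => f x ^ 4)).symm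
    _ ≤ _ := hbound
    _ = 4 * (∫ x, m x) ^ 2 := by
      rw [integral_const_mul, integral_const_mul, hfst, hsnd]
      ring

/-- **Ladyzhenskaya inequality in two dimensions.**
For a continuously differentiable, compactly supported `f : ℝ² → ℝ`,
`‖f‖_{L⁴} ≤ √2 · ‖f‖_{L²}^{1/2} · ‖∇f‖_{L²}^{1/2}`. -/
theorem ladyzhenskaya_inequality (f : EuclideanSpace ℝ (Fin 2) → ℝ)
    (hf : ContDiff ℝ 1 f) (hsupp : HasCompactSupport f) :
    (∫ x, |f x| ^ (4 : ℝ)) ^ ((1 : ℝ) / 4) ≤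
      Real.sqrt 2 * (∫ x, |f x| ^ (2 : ℝ)) ^ ((1 : ℝ) / 4) *
        (∫ x, ‖gradient f x‖ ^ (2 : ℝ)) ^ ((1 : ℝ) / 4) := by
  set A := ∫ x, |f x| ^ (2 : ℝ)
  set B := ∫ x, ‖gradient f x‖ ^ (2 : ℝ)
  have hA : 0 ≤ A := integral_nonneg fun x => by positivity
  have hB : 0 ≤ B := integral_nonneg fun x => by positivity
  have hpow : ∀ x, |f x| ^ (4 : ℝ) = f x ^ 4 := fun x => by
    rw [← Even.pow_abs ⟨2, rfl⟩, ← Real.rpow_natCast]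
    norm_num
  have hCS : ∫ x, |f x| * ‖gradient f x‖ ≤ √A * √B := by
    simpa only [Real.sqrt_eq_rpow] using
      integral_mul_le_Lp_mul_Lq_of_nonneg Real.HolderConjugate.two_two
        (.of_forall fun x => abs_nonneg (f x)) (.of_forall fun x => norm_nonneg (gradient f x))
        (hf.continuous.abs.memLp_of_hasCompactSupport hsupp.abs)
        (hf.continuous_gradient.norm.memLp_of_hasCompactSupport hsupp.gradient.norm)
  have hL4 : ∫ x, |f x| ^ (4 : ℝ) ≤ 4 * (A * B) :=
    calc ∫ x, |f x| ^ (4 : ℝ) ≤ 4 * (∫ x, |f x| * ‖gradient f x‖) ^ 2 := by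
          simpa only [hpow] using
            integral_pow_four_le_four_mul_sq_integral_abs_mul_norm_gradient hf hsupp
      _ ≤ 4 * (√A * √B) ^ 2 := by gcongr
      _ = 4 * (A * B) := by rw [mul_pow, Real.sq_sqrt hA, Real.sq_sqrt hB]
  have hfour : (4 : ℝ) ^ ((1 : ℝ) / 4) = √2 := by
    rw [Real.sqrt_eq_rpow, show (4 : ℝ) = 2 ^ (2 : ℝ) by norm_num, ← Real.rpow_mul (by norm_num)]
    norm_num
  calc (∫ x, |f x| ^ (4 : ℝ)) ^ ((1 : ℝ) / 4) ≤ (4 * (A * B)) ^ ((1 : ℝ) / 4) :=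
        Real.rpow_le_rpow (integral_nonneg fun x => by positivity) hL4 (by norm_num)
    _ = √2 * A ^ ((1 : ℝ) / 4) * B ^ ((1 : ℝ) / 4) := by
        rw [Real.mul_rpow (by norm_num) (by positivity), Real.mul_rpow hA hB, hfour, mul_assoc]
end

section
/- Let Ω ⊆ ℝ² be a measurable set, let ψ : Ω → Ω be a measurable bijection with measurable inverse that preserves two-dimensional Lebesgue measure, and suppose there is a constant K > 0 such that ‖u − v‖ ≤ K · ‖ψ(u) − ψ(v)‖ for all u, v ∈ Ω. Let q ∈ [1, ∞), s ∈ (0, 1), and let a₀ : Ω → ℝ be measurable. Then the Gagliardo double integral satisfies ∫_Ω ∫_Ω |a₀(ψ⁻¹(x)) − a₀(ψ⁻¹(y))|^q / ‖x − y‖^{sq+2} dx dy ≤ K^{sq+2} · ∫_Ω ∫_Ω |a₀(u) − a₀(v)|^q / ‖u − v‖^{sq+2} du dv (as an inequality of extended-real-valued Lebesgue integrals); equivalently, the Gagliardo seminorm of a₀ ∘ ψ⁻¹ of order (s, q) is at most K^{s + 2/q} times that of a₀. -/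
open MeasureTheory

/-!
Substituting `x = ψ u`, `y = ψ v` turns the left-hand side into the double integral of
`|a₀ u - a₀ v| ^ q / ‖ψ u - ψ v‖ ^ (s q + 2)`, and `‖u - v‖ ≤ K ‖ψ u - ψ v‖` bounds this kernel
pointwise by `K ^ (s q + 2)` times the kernel of `a₀`.
-/

theorem lintegral_lintegral_le_lintegral_lintegral_comp {α β : Type*} [MeasurableSpace α]
    [MeasurableSpace β] {μ : Measure α} {ν : Measure β} {ψ : α → β}
    (hψ : MeasurePreserving ψ μ ν) (f : β → β → ENNReal) :
    ∫⁻ x, ∫⁻ y, f x y ∂ν ∂ν ≤ ∫⁻ u, ∫⁻ v, f (ψ u) (ψ v) ∂μ ∂μ := by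
  rw [← hψ.map_eq]
  calc ∫⁻ x, ∫⁻ y, f x y ∂μ.map ψ ∂μ.map ψ
      ≤ ∫⁻ u, ∫⁻ y, f (ψ u) y ∂μ.map ψ ∂μ := lintegral_map_le _ _
    _ ≤ ∫⁻ u, ∫⁻ v, f (ψ u) (ψ v) ∂μ ∂μ := lintegral_mono fun _ ↦ lintegral_map_le _ _

theorem ofReal_div_norm_sub_rpow_le {E F : Type*} [NormedAddCommGroup E] [NormedAddCommGroup F]
    {x y : E} {u v : F} {A K p : ℝ} (hA : 0 ≤ A) (hp : 0 < p)
    (hK : ‖u - v‖ ≤ K * ‖x - y‖) (hxy : u = v → x = y) :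
    ENNReal.ofReal (A / ‖x - y‖ ^ p)
      ≤ ENNReal.ofReal (K ^ p) * ENNReal.ofReal (A / ‖u - v‖ ^ p) := by
  rcases eq_or_ne u v with huv | huv
  · simp [hxy huv, Real.zero_rpow hp.ne']
  have hC : 0 < ‖u - v‖ := norm_pos_iff.mpr (sub_ne_zero.mpr huv)
  have hKB : 0 < K * ‖x - y‖ := hC.trans_le hK
  have hK₀ : 0 < K := pos_of_mul_pos_left hKB (norm_nonneg _)
  have hB : 0 < ‖x - y‖ := pos_of_mul_pos_right hKB hK₀.le
  have hCp : ‖u - v‖ ^ p ≤ K ^ p * ‖x - y‖ ^ p := by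
    rw [← Real.mul_rpow hK₀.le hB.le]
    exact Real.rpow_le_rpow hC.le hK hp.le
  rw [← ENNReal.ofReal_mul (Real.rpow_nonneg hK₀.le p)]
  refine ENNReal.ofReal_le_ofReal ?_
  rw [mul_div_assoc', div_le_div_iff₀ (by positivity) (by positivity)]
  calc A * ‖u - v‖ ^ p ≤ A * (K ^ p * ‖x - y‖ ^ p) := mul_le_mul_of_nonneg_left hCp hA
    _ = K ^ p * A * ‖x - y‖ ^ p := by ring

theorem gagliardo_double_integral_flow_general (Ω : Set (EuclideanSpace ℝ (Fin 2)))
    (hΩ : MeasurableSet Ω)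
    (ψ ψinv : EuclideanSpace ℝ (Fin 2) → EuclideanSpace ℝ (Fin 2))
    (hinv : Set.InvOn ψinv ψ Ω Ω)
    (hmp : MeasurePreserving ψ (volume.restrict Ω) (volume.restrict Ω))
    (K : ℝ)
    (hexpand : ∀ u ∈ Ω, ∀ v ∈ Ω, ‖u - v‖ ≤ K * ‖ψ u - ψ v‖)
    (q s : ℝ) (hq : 1 ≤ q) (hs : s ∈ Set.Ioo (0 : ℝ) 1)
    (a₀ : EuclideanSpace ℝ (Fin 2) → ℝ) :
    ∫⁻ x in Ω, ∫⁻ y in Ω,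
        ENNReal.ofReal (|a₀ (ψinv x) - a₀ (ψinv y)| ^ q / ‖x - y‖ ^ (s * q + 2))
      ≤ ENNReal.ofReal (K ^ (s * q + 2)) *
        ∫⁻ u in Ω, ∫⁻ v in Ω,
          ENNReal.ofReal (|a₀ u - a₀ v| ^ q / ‖u - v‖ ^ (s * q + 2)) := by
  have hp : 0 < s * q + 2 := by nlinarith [hs.1]
  calc _ ≤ ∫⁻ u in Ω, ∫⁻ v in Ω, ENNReal.ofReal
          (|a₀ (ψinv (ψ u)) - a₀ (ψinv (ψ v))| ^ q / ‖ψ u - ψ v‖ ^ (s * q + 2)) :=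
        lintegral_lintegral_le_lintegral_lintegral_comp hmp _
    _ ≤ ∫⁻ u in Ω, ∫⁻ v in Ω, ENNReal.ofReal (K ^ (s * q + 2)) *
          ENNReal.ofReal (|a₀ u - a₀ v| ^ q / ‖u - v‖ ^ (s * q + 2)) := by
        refine setLIntegral_mono' hΩ fun u hu ↦ setLIntegral_mono' hΩ fun v hv ↦ ?_
        rw [hinv.1 hu, hinv.1 hv]
        exact ofReal_div_norm_sub_rpow_le (by positivity) hp (hexpand u hu v hv)
          (congrArg ψ)
    _ = _ := by simp_rw [lintegral_const_mul' _ _ ENNReal.ofReal_ne_top]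

/-- **Change of variables in the Gagliardo seminorm under a measure-preserving,
co-Lipschitz bijection.** If `ψ : Ω → Ω` is a measurable bijection with measurable
inverse preserving 2-D Lebesgue measure and `‖u - v‖ ≤ K ‖ψ u - ψ v‖` on `Ω`, then
the Gagliardo double integral of `a₀ ∘ ψ⁻¹` of order `(s, q)` is at most
`K^{sq+2}` times that of `a₀`. -/
theorem gagliardo_double_integral_flow (Ω : Set (EuclideanSpace ℝ (Fin 2)))
    (hΩ : MeasurableSet Ω)
    (ψ ψinv : EuclideanSpace ℝ (Fin 2) → EuclideanSpace ℝ (Fin 2))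
    (hψmeas : Measurable ψ) (hψinvmeas : Measurable ψinv)
    (hbij : Set.BijOn ψ Ω Ω) (hinv : Set.InvOn ψinv ψ Ω Ω)
    (hmp : MeasurePreserving ψ (volume.restrict Ω) (volume.restrict Ω))
    (K : ℝ) (hK : 0 < K)
    (hexpand : ∀ u ∈ Ω, ∀ v ∈ Ω, ‖u - v‖ ≤ K * ‖ψ u - ψ v‖)
    (q s : ℝ) (hq : 1 ≤ q) (hs : s ∈ Set.Ioo (0 : ℝ) 1)
    (a₀ : EuclideanSpace ℝ (Fin 2) → ℝ) (ha₀ : Measurable a₀) :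
    ∫⁻ x in Ω, ∫⁻ y in Ω,
        ENNReal.ofReal (|a₀ (ψinv x) - a₀ (ψinv y)| ^ q / ‖x - y‖ ^ (s * q + 2))
      ≤ ENNReal.ofReal (K ^ (s * q + 2)) *
        ∫⁻ u in Ω, ∫⁻ v in Ω,
          ENNReal.ofReal (|a₀ u - a₀ v| ^ q / ‖u - v‖ ^ (s * q + 2)) :=
  gagliardo_double_integral_flow_general Ω hΩ ψ ψinv hinv hmp K hexpand q s hq hs a₀
end

section
/- Let Ω ⊆ ℝ² be a measurable set, let ψ : Ω → Ω be a measurable bijection with measurable inverse that preserves two-dimensional Lebesgue measure, and suppose there is a constant K ≥ 1 such that ‖u − v‖ ≤ K · ‖ψ(u) − ψ(v)‖ for all u, v ∈ Ω. Let q ∈ [1, ∞), s ∈ (0, 1), and let a₀ : Ω → ℝ be measurable. Then ‖a₀ ∘ ψ⁻¹‖_{W^{s,q}(Ω)} ≤ K^{s + 2/q} · ‖a₀‖_{W^{s,q}(Ω)}, where ‖f‖_{W^{s,q}(Ω)} = ‖f‖_{L^q(Ω)} + (∫_Ω ∫_Ω |f(x) − f(y)|^q / ‖x − y‖^{sq+2}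 dx dy)^{1/q}. -/
/-!
Substituting `x = ψ u`, `y = ψ v` (legitimate because `ψ` preserves the measure on `Ω`)
turns the `L^q` integral of `a₀ ∘ ψ⁻¹` into that of `a₀`, and the Gagliardo integral into
one with kernel `‖ψ u - ψ v‖^{-(sq+2)} ≤ K^{sq+2} ‖u - v‖^{-(sq+2)}`. Taking `q`-th roots
turns `K^{sq+2}` into `K^{s+2/q} ≥ 1`. Only the inequality `∫ g dν ≤ ∫ g ∘ ψ dμ` of the
substitution is needed, and it holds for every `g`, measurable or not.
-/

open MeasureTheory Set
open scoped ENNReal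

namespace MeasureTheory.MeasurePreserving

variable {α β : Type*} [MeasurableSpace α] [MeasurableSpace β] {μ : Measure α} {ν : Measure β}
  {f : α → β}

theorem lintegral_le_lintegral_comp (hf : MeasurePreserving f μ ν) (g : β → ℝ≥0∞) :
    ∫⁻ y, g y ∂ν ≤ ∫⁻ x, g (f x) ∂μ :=
  hf.map_eq ▸ lintegral_map_le g f

theorem lintegral_lintegral_le_lintegral_lintegral_comp (hf : MeasurePreserving f μ ν)
    (g : β → β → ℝ≥0∞) :
    ∫⁻ x, ∫⁻ y, g x y ∂ν ∂ν ≤ ∫⁻ u, ∫⁻ v, g (f u) (f v) ∂μ ∂μ :=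
  calc ∫⁻ x, ∫⁻ y, g x y ∂ν ∂ν ≤ ∫⁻ x, ∫⁻ v, g x (f v) ∂μ ∂ν :=
        lintegral_mono fun x ↦ hf.lintegral_le_lintegral_comp (g x)
    _ ≤ ∫⁻ u, ∫⁻ v, g (f u) (f v) ∂μ ∂μ :=
        hf.lintegral_le_lintegral_comp fun x ↦ ∫⁻ v, g x (f v) ∂μ

end MeasureTheory.MeasurePreserving

theorem div_rpow_le_rpow_mul_div_rpow {N d d' K e : ℝ} (hN : 0 ≤ N) (he : 0 ≤ e) (hd : 0 ≤ d)
    (hd' : 0 < d') (hdd' : d' ≤ K * d) :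
    N / d ^ e ≤ K ^ e * (N / d' ^ e) := by
  have hKd : 0 < K * d := hd'.trans_le hdd'
  have hK : 0 < K := pos_of_mul_pos_left hKd hd
  have hd0 : 0 < d := pos_of_mul_pos_right hKd hK.le
  calc N / d ^ e = K ^ e * (N / (K * d) ^ e) := by
        rw [Real.mul_rpow hK.le hd0.le]
        field_simp
    _ ≤ K ^ e * (N / d' ^ e) := by gcongr

variable {E : Type*} [MeasurableSpace E] {μ : Measure E} {Ω : Set E} {ψ ψinv : E → E}

theorem setLIntegral_comp_le_of_leftInvOn (hΩ : MeasurableSet Ω)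
    (hmp : MeasurePreserving ψ (μ.restrict Ω) (μ.restrict Ω)) (hinv : LeftInvOn ψinv ψ Ω)
    (F : E → ℝ≥0∞) :
    ∫⁻ x in Ω, F (ψinv x) ∂μ ≤ ∫⁻ u in Ω, F u ∂μ :=
  calc ∫⁻ x in Ω, F (ψinv x) ∂μ ≤ ∫⁻ u in Ω, F (ψinv (ψ u)) ∂μ :=
        hmp.lintegral_le_lintegral_comp _
    _ = ∫⁻ u in Ω, F u ∂μ := setLIntegral_congr_fun hΩ fun u hu ↦ by rw [hinv hu]

/-- The `q`-th power of the Gagliardo seminorm of `f` on `Ω`, for the kernel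
`‖x - y‖^{-e}`; on a domain of dimension `n` one takes `e = sq + n`. -/
noncomputable def gagliardoIntegral [NormedAddCommGroup E] (μ : Measure E) (Ω : Set E)
    (q e : ℝ) (f : E → ℝ) : ℝ≥0∞ :=
  ∫⁻ x in Ω, ∫⁻ y in Ω, ENNReal.ofReal (|f x - f y| ^ q / ‖x - y‖ ^ e) ∂μ ∂μ

theorem gagliardoIntegral_comp_le [NormedAddCommGroup E] (hΩ : MeasurableSet Ω)
    (hmp : MeasurePreserving ψ (μ.restrict Ω) (μ.restrict Ω)) (hinv : LeftInvOn ψinv ψ Ω)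
    {K : ℝ} (hexpand : ∀ u ∈ Ω, ∀ v ∈ Ω, ‖u - v‖ ≤ K * ‖ψ u - ψ v‖) {q e : ℝ} (hq : 0 < q)
    (he : 0 ≤ e) (f : E → ℝ) :
    gagliardoIntegral μ Ω q e (fun x ↦ f (ψinv x)) ≤
      ENNReal.ofReal (K ^ e) * gagliardoIntegral μ Ω q e f := by
  have kernel_le : ∀ u ∈ Ω, ∀ v ∈ Ω,
      ENNReal.ofReal (|f u - f v| ^ q / ‖ψ u - ψ v‖ ^ e) ≤
        ENNReal.ofReal (K ^ e) * ENNReal.ofReal (|f u - f v| ^ q / ‖u - v‖ ^ e) := by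
    intro u hu v hv
    rw [← ENNReal.ofReal_mul' (by positivity)]
    refine ENNReal.ofReal_le_ofReal ?_
    rcases eq_or_ne u v with rfl | huv
    · simp [Real.zero_rpow hq.ne']
    · exact div_rpow_le_rpow_mul_div_rpow (by positivity) he (norm_nonneg _)
        (norm_pos_iff.mpr (sub_ne_zero.mpr huv)) (hexpand u hu v hv)
  calc gagliardoIntegral μ Ω q e (fun x ↦ f (ψinv x))
      ≤ ∫⁻ u in Ω, ∫⁻ v in Ω,
          ENNReal.ofReal (|f (ψinv (ψ u)) - f (ψinv (ψ v))| ^ q / ‖ψ u - ψ v‖ ^ e) ∂μ ∂μ :=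
        hmp.lintegral_lintegral_le_lintegral_lintegral_comp
          fun x y ↦ ENNReal.ofReal (|f (ψinv x) - f (ψinv y)| ^ q / ‖x - y‖ ^ e)
    _ ≤ ∫⁻ u in Ω, ∫⁻ v in Ω,
          ENNReal.ofReal (K ^ e) * ENNReal.ofReal (|f u - f v| ^ q / ‖u - v‖ ^ e) ∂μ ∂μ :=
        setLIntegral_mono' hΩ fun u hu ↦ setLIntegral_mono' hΩ fun v hv ↦ by
          simpa only [hinv hu, hinv hv] using kernel_le u hu v hv
    _ = ENNReal.ofReal (K ^ e) * gagliardoIntegral μ Ω q e f := by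
        simp only [lintegral_const_mul' _ _ ENNReal.ofReal_ne_top, gagliardoIntegral]

theorem fractional_sobolev_norm_flow_general (Ω : Set (EuclideanSpace ℝ (Fin 2)))
    (hΩ : MeasurableSet Ω)
    (ψ ψinv : EuclideanSpace ℝ (Fin 2) → EuclideanSpace ℝ (Fin 2))
    (hinv : Set.InvOn ψinv ψ Ω Ω)
    (hmp : MeasurePreserving ψ (volume.restrict Ω) (volume.restrict Ω))
    (K : ℝ) (hK : 1 ≤ K)
    (hexpand : ∀ u ∈ Ω, ∀ v ∈ Ω, ‖u - v‖ ≤ K * ‖ψ u - ψ v‖)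
    (q s : ℝ) (hq : 1 ≤ q) (hs : s ∈ Set.Ioo (0 : ℝ) 1)
    (a₀ : EuclideanSpace ℝ (Fin 2) → ℝ) :
    (∫⁻ x in Ω, ENNReal.ofReal (|a₀ (ψinv x)| ^ q)) ^ (1 / q) +
      (∫⁻ x in Ω, ∫⁻ y in Ω,
        ENNReal.ofReal
          (|a₀ (ψinv x) - a₀ (ψinv y)| ^ q / ‖x - y‖ ^ (s * q + 2))) ^ (1 / q)
      ≤ ENNReal.ofReal (K ^ (s + 2 / q)) *
        ((∫⁻ u in Ω, ENNReal.ofReal (|a₀ u| ^ q)) ^ (1 / q) +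
          (∫⁻ u in Ω, ∫⁻ v in Ω,
            ENNReal.ofReal
              (|a₀ u - a₀ v| ^ q / ‖u - v‖ ^ (s * q + 2))) ^ (1 / q)) := by
  have hq0 : 0 < q := one_pos.trans_le hq
  have hK0 : 0 < K := one_pos.trans_le hK
  have hconst : ENNReal.ofReal (K ^ (s * q + 2)) ^ (1 / q) = ENNReal.ofReal (K ^ (s + 2 / q)) := by
    rw [ENNReal.ofReal_rpow_of_pos (by positivity), ← Real.rpow_mul hK0.le]
    congr 2
    field_simp
  have hconst_ge_one : 1 ≤ ENNReal.ofReal (K ^ (s + 2 / q)) :=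
    ENNReal.one_le_ofReal.mpr (Real.one_le_rpow hK (by linarith [hs.1, div_pos two_pos hq0]))
  have hgagliardo := gagliardoIntegral_comp_le hΩ hmp hinv.1 hexpand hq0
    (by nlinarith [hs.1] : 0 ≤ s * q + 2) a₀
  rw [mul_add]
  gcongr
  · exact (ENNReal.rpow_le_rpow (setLIntegral_comp_le_of_leftInvOn hΩ hmp hinv.1 _)
      (by positivity)).trans (le_mul_of_one_le_left zero_le hconst_ge_one)
  · calc _ ≤ (ENNReal.ofReal (K ^ (s * q + 2)) *
          gagliardoIntegral volume Ω q (s * q + 2) a₀) ^ (1 / q) :=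
          ENNReal.rpow_le_rpow hgagliardo (by positivity)
      _ = _ := by rw [ENNReal.mul_rpow_of_nonneg _ _ (by positivity), hconst]; rfl

/-- **Fractional Sobolev norm bound under a measure-preserving, co-Lipschitz
bijection (Lemma 2.5 of the paper, quantitative form).** If `ψ : Ω → Ω` is a
measurable bijection with measurable inverse preserving 2-D Lebesgue measure and
`‖u - v‖ ≤ K ‖ψ u - ψ v‖` on `Ω` with `K ≥ 1`, then
`‖a₀ ∘ ψ⁻¹‖_{W^{s,q}(Ω)} ≤ K^{s + 2/q} ‖a₀‖_{W^{s,q}(Ω)}`, where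
`‖f‖_{W^{s,q}} = ‖f‖_{L^q} + [f]_{W^{s,q}}` (norms computed in `ℝ≥0∞`). -/
theorem fractional_sobolev_norm_flow (Ω : Set (EuclideanSpace ℝ (Fin 2)))
    (hΩ : MeasurableSet Ω)
    (ψ ψinv : EuclideanSpace ℝ (Fin 2) → EuclideanSpace ℝ (Fin 2))
    (hψmeas : Measurable ψ) (hψinvmeas : Measurable ψinv)
    (hbij : Set.BijOn ψ Ω Ω) (hinv : Set.InvOn ψinv ψ Ω Ω)
    (hmp : MeasurePreserving ψ (volume.restrict Ω) (volume.restrict Ω))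
    (K : ℝ) (hK : 1 ≤ K)
    (hexpand : ∀ u ∈ Ω, ∀ v ∈ Ω, ‖u - v‖ ≤ K * ‖ψ u - ψ v‖)
    (q s : ℝ) (hq : 1 ≤ q) (hs : s ∈ Set.Ioo (0 : ℝ) 1)
    (a₀ : EuclideanSpace ℝ (Fin 2) → ℝ) (ha₀ : Measurable a₀) :
    (∫⁻ x in Ω, ENNReal.ofReal (|a₀ (ψinv x)| ^ q)) ^ (1 / q) +
      (∫⁻ x in Ω, ∫⁻ y in Ω,
        ENNReal.ofReal
          (|a₀ (ψinv x) - a₀ (ψinv y)| ^ q / ‖x - y‖ ^ (s * q + 2))) ^ (1 / q)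
      ≤ ENNReal.ofReal (K ^ (s + 2 / q)) *
        ((∫⁻ u in Ω, ENNReal.ofReal (|a₀ u| ^ q)) ^ (1 / q) +
          (∫⁻ u in Ω, ∫⁻ v in Ω,
            ENNReal.ofReal
              (|a₀ u - a₀ v| ^ q / ‖u - v‖ ^ (s * q + 2))) ^ (1 / q)) :=
  fractional_sobolev_norm_flow_general Ω hΩ ψ ψinv hinv hmp K hK hexpand q s hq hs a₀
end
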